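/- Let n ≥ 2, α ∈ (0,1), and let p = (1/n,…,1/n) be the uniform probability vector. Set κ := n(1−α), k := ⌊κ⌋, and C_{α,n} := √( n(k + (κ − k)²) − κ² ) / κ. Then for every f ∈ ℝⁿ, CVaR_{p,α}(f) − E_p(f) ≤ C_{α,n} · √(V_p(f)), and the inequality is tight: there exists a nonconstant f ∈ ℝⁿ attaining equality. -/

import Mathlib

/-!
For `q` in the simplex, `∑ q f - E f = ∑ (q - p) (f - E f) ≤ ‖q - p‖ ‖f - E f‖` by
Cauchy–Schwarz, and `‖q - p‖² = ∑ q² - 1/n`. If moreover `q ≤ κ⁻¹`, then `a = κ q` lies in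
`[0,1]ⁿ` with `∑ a = κ`; adding the coordinates one at a time shows
`∑ a (1 - a) ≥ fract κ (1 - fract κ)`, i.e. `∑ q² ≤ (⌊κ⌋ + fract κ²) / κ²`. Equality holds for
`q* = (1, …, 1, fract κ, 0, …, 0) / κ`, and `f = q* - p` makes Cauchy–Schwarz an equality too.
-/

open Finset

lemma fract_sum_mul_one_sub_fract_le {ι : Type*} (s : Finset ι) (a : ι → ℝ)
    (ha : ∀ i ∈ s, 0 ≤ a i ∧ a i ≤ 1) :
    Int.fract (∑ i ∈ s, a i) * (1 - Int.fract (∑ i ∈ s, a i)) ≤ ∑ i ∈ s, a i * (1 - a i) := by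
  induction s using Finset.cons_induction with
  | empty => simp
  | cons j s _ ih =>
    rw [sum_cons, sum_cons]
    obtain ⟨hx0, hx1⟩ := ha j (mem_cons_self j s)
    have ih := ih fun i hi => ha i (mem_cons_of_mem hi)
    set x := a j
    set u := Int.fract (∑ i ∈ s, a i)
    have hu0 : 0 ≤ u := Int.fract_nonneg _
    have hu1 : u < 1 := Int.fract_lt_one _
    have hshift : Int.fract (x + ∑ i ∈ s, a i) = Int.fract (x + u) := by
      rw [← Int.fract_add_floor (∑ i ∈ s, a i), ← add_assoc, Int.fract_add_intCast]
    rw [hshift]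
    rcases lt_or_ge (x + u) 1 with hlt | hge
    · rw [Int.fract_eq_self.mpr ⟨by positivity, hlt⟩]
      nlinarith [mul_nonneg hx0 hu0]
    · rw [← Int.fract_sub_one, Int.fract_eq_self.mpr ⟨by linarith, by linarith⟩]
      nlinarith [mul_nonneg (sub_nonneg.mpr hx1) (sub_nonneg.mpr hu1.le)]

lemma sum_sq_le_floor_add_fract_sq {ι : Type*} (s : Finset ι) (a : ι → ℝ)
    (ha : ∀ i ∈ s, 0 ≤ a i ∧ a i ≤ 1) :
    ∑ i ∈ s, a i ^ 2 ≤ ⌊∑ i ∈ s, a i⌋ + Int.fract (∑ i ∈ s, a i) ^ 2 := by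
  have hfract := fract_sum_mul_one_sub_fract_le s a ha
  have hsplit : ∑ i ∈ s, a i * (1 - a i) = ∑ i ∈ s, a i - ∑ i ∈ s, a i ^ 2 := by
    simp only [mul_one_sub, sq, sum_sub_distrib]
  nlinarith [Int.floor_add_fract (∑ i ∈ s, a i)]

/-- For `0 ≤ κ ≤ n`, the vector `(1, …, 1, Int.fract κ, 0, …, 0)` with `⌊κ⌋` leading ones. -/
noncomputable def greedyFill (n : ℕ) (κ : ℝ) : Fin n → ℝ :=
  fun i => max 0 (min 1 (κ - i))

lemma greedyFill_mem_Icc (n : ℕ) (κ : ℝ) (i : Fin n) :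
    0 ≤ greedyFill n κ i ∧ greedyFill n κ i ≤ 1 :=
  ⟨le_max_left _ _, max_le zero_le_one (min_le_left _ _)⟩

lemma sum_comp_greedyFill (g : ℝ → ℝ) (hg : g 0 = 0) (n : ℕ) (κ : ℝ) (hκ0 : 0 ≤ κ)
    (hκn : κ ≤ n) : ∑ i, g (greedyFill n κ i) = ⌊κ⌋ * g 1 + g (Int.fract κ) := by
  induction n generalizing κ with
  | zero =>
    obtain rfl : κ = 0 := le_antisymm (by simpa using hκn) hκ0
    simp [hg]
  | succ n ih =>
    rw [Fin.sum_univ_succ]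
    have hshift : ∀ i : Fin n, greedyFill (n + 1) κ i.succ = greedyFill n (κ - 1) i := by
      intro i
      simp only [greedyFill, Fin.val_succ, Nat.cast_succ]
      ring_nf
    simp only [hshift]
    rcases lt_or_ge κ 1 with hlt | hge
    · have hzero : ∀ i : Fin n, greedyFill n (κ - 1) i = 0 := fun i => by
        simp only [greedyFill]
        exact max_eq_left (min_le_of_right_le (by linarith [(Nat.cast_nonneg i : (0:ℝ) ≤ i)]))
      have hfl : ⌊κ⌋ = 0 := Int.floor_eq_zero_iff.mpr ⟨hκ0, hlt⟩
      have hfirst : greedyFill (n + 1) κ 0 = κ := by simp [greedyFill, hκ0, hlt.le]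
      rw [sum_eq_zero fun i _ => by rw [hzero, hg], hfirst, hfl, Int.fract_eq_self.mpr ⟨hκ0, hlt⟩]
      simp
    · rw [ih (κ - 1) (by linarith) (by push_cast at hκn; linarith), Int.floor_sub_one,
        Int.fract_sub_one]
      have hfirst : greedyFill (n + 1) κ 0 = 1 := by simp [greedyFill, hge]
      rw [hfirst]
      push_cast
      ring

lemma sum_greedyFill (n : ℕ) (κ : ℝ) (hκ0 : 0 ≤ κ) (hκn : κ ≤ n) :
    ∑ i, greedyFill n κ i = κ := by
  simpa [Int.floor_add_fract] using sum_comp_greedyFill id rfl n κ hκ0 hκn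

lemma sum_greedyFill_sq (n : ℕ) (κ : ℝ) (hκ0 : 0 ≤ κ) (hκn : κ ≤ n) :
    ∑ i, greedyFill n κ i ^ 2 = ⌊κ⌋ + Int.fract κ ^ 2 := by
  simpa using sum_comp_greedyFill (· ^ 2) (zero_pow two_ne_zero) n κ hκ0 hκn

lemma greedyFill_last_lt_first (n : ℕ) (hn : 2 ≤ n) (κ : ℝ) (hκ0 : 0 < κ) (hκn : κ < n) :
    greedyFill n κ ⟨n - 1, by omega⟩ < greedyFill n κ ⟨0, by omega⟩ := by
  have hcast : ((n - 1 : ℕ) : ℝ) = n - 1 := by rw [Nat.cast_sub (by omega), Nat.cast_one]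
  have hone : (1 : ℝ) ≤ n - 1 := by
    rw [le_sub_iff_add_le, one_add_one_eq_two]; exact_mod_cast hn
  simp only [greedyFill, hcast, Nat.cast_zero, sub_zero, max_eq_right (le_min zero_le_one hκ0.le)]
  exact max_lt (lt_min one_pos hκ0)
    ((min_le_right _ _).trans_lt (lt_min (by linarith) (by linarith)))

def cappedSimplex (n : ℕ) (c : ℝ) : Set (Fin n → ℝ) :=
  {q | (∑ i, q i = 1 ∧ ∀ i, 0 ≤ q i) ∧ ∀ i, q i ≤ c}

/-- The CVaR of `f` under the uniform distribution on `Fin n` at the level `α` with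
`κ = n (1 - α)`: the density cap `p i / (1 - α)` is then `κ⁻¹`. -/
noncomputable def uniformCVaR (n : ℕ) (κ : ℝ) (f : Fin n → ℝ) : ℝ :=
  sSup ((fun q : Fin n → ℝ => ∑ i, q i * f i) '' cappedSimplex n κ⁻¹)

lemma sum_sq_le_of_mem_cappedSimplex {n : ℕ} {κ : ℝ} (hκ : 0 < κ) {q : Fin n → ℝ}
    (hq : q ∈ cappedSimplex n κ⁻¹) : ∑ i, q i ^ 2 ≤ (⌊κ⌋ + Int.fract κ ^ 2) / κ ^ 2 := by
  obtain ⟨⟨hq1, hq0⟩, hqc⟩ := hq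
  have hscaled : ∑ i, κ * q i = κ := by rw [← mul_sum, hq1, mul_one]
  have h := sum_sq_le_floor_add_fract_sq univ (fun i => κ * q i) fun i _ =>
    ⟨mul_nonneg hκ.le (hq0 i), (le_inv_mul_iff₀ hκ).mp (by simpa using hqc i)⟩
  simp only [hscaled, mul_pow, ← mul_sum] at h
  rwa [le_div_iff₀ (by positivity), mul_comm]

lemma natCast_ne_zero_of_sum_eq_one {n : ℕ} (q : Fin n → ℝ) (hq : ∑ i, q i = 1) :
    (n : ℝ) ≠ 0 := by
  rintro h
  obtain rfl : n = 0 := by exact_mod_cast h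
  simp at hq

lemma sum_sub_inv_sq {n : ℕ} (q : Fin n → ℝ) (hq : ∑ i, q i = 1) :
    ∑ i, (q i - 1 / n) ^ 2 = ∑ i, q i ^ 2 - 1 / n := by
  have hn := natCast_ne_zero_of_sum_eq_one q hq
  simp only [sub_sq, sum_add_distrib, sum_sub_distrib, mul_assoc, ← mul_sum, ← sum_mul, hq,
    sum_const, card_univ, Fintype.card_fin, nsmul_eq_mul]
  field_simp
  ring

lemma sum_mul_sub_mean_le {n : ℕ} (q f : Fin n → ℝ) (hq : ∑ i, q i = 1) :
    ∑ i, q i * f i - ∑ i, 1 / (n : ℝ) * f i ≤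
      √(∑ i, q i ^ 2 - 1 / n) * √(∑ i, (f i - ∑ j, 1 / (n : ℝ) * f j) ^ 2) := by
  have hn := natCast_ne_zero_of_sum_eq_one q hq
  set μ := ∑ j, 1 / (n : ℝ) * f j
  have hcentred : ∑ i, q i * f i - μ = ∑ i, (q i - 1 / n) * (f i - μ) := by
    simp only [sub_mul, mul_sub, sum_sub_distrib, ← sum_mul, hq, sum_const, card_univ,
      Fintype.card_fin, nsmul_eq_mul, μ]
    field_simp
    ring
  rw [hcentred, ← sum_sub_inv_sq q hq]
  exact Real.sum_mul_le_sqrt_mul_sqrt _ _ _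

lemma mean_add_mem_upperBounds {n : ℕ} {κ : ℝ} (hκ : 0 < κ) (f : Fin n → ℝ) :
    ∑ i, 1 / (n : ℝ) * f i + √((⌊κ⌋ + Int.fract κ ^ 2) / κ ^ 2 - 1 / n) *
        √(∑ i, (f i - ∑ j, 1 / (n : ℝ) * f j) ^ 2) ∈
      upperBounds ((fun q : Fin n → ℝ => ∑ i, q i * f i) '' cappedSimplex n κ⁻¹) := by
  rintro _ ⟨q, hq, rfl⟩
  have hdev := sum_mul_sub_mean_le q f hq.1.1
  have hnorm : √(∑ i, q i ^ 2 - 1 / n) ≤ √((⌊κ⌋ + Int.fract κ ^ 2) / κ ^ 2 - 1 / n) :=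
    Real.sqrt_le_sqrt (sub_le_sub_right (sum_sq_le_of_mem_cappedSimplex hκ hq) _)
  nlinarith [mul_le_mul_of_nonneg_right hnorm (Real.sqrt_nonneg
    (∑ i, (f i - ∑ j, 1 / (n : ℝ) * f j) ^ 2))]

lemma uniform_mem_cappedSimplex {n : ℕ} {κ : ℝ} (hκ0 : 0 < κ) (hκn : κ ≤ n) :
    (fun _ => 1 / (n : ℝ)) ∈ cappedSimplex n κ⁻¹ := by
  have hn : (0 : ℝ) < n := hκ0.trans_le hκn
  refine ⟨⟨?_, fun _ => by positivity⟩, fun _ => ?_⟩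
  · simp [hn.ne']
  · rw [one_div]
    exact inv_anti₀ hκ0 hκn

lemma greedyFill_div_mem_cappedSimplex {n : ℕ} {κ : ℝ} (hκ0 : 0 < κ) (hκn : κ ≤ n) :
    (fun i => greedyFill n κ i / κ) ∈ cappedSimplex n κ⁻¹ := by
  refine ⟨⟨?_, fun i => div_nonneg (greedyFill_mem_Icc n κ i).1 hκ0.le⟩, fun i => ?_⟩
  · rw [← sum_div, sum_greedyFill n κ hκ0.le hκn, div_self hκ0.ne']
  · exact (div_eq_mul_inv _ κ).trans_le <|
      mul_le_of_le_one_left (inv_nonneg.mpr hκ0.le) (greedyFill_mem_Icc n κ i).2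

lemma uniformCVaR_le {n : ℕ} {κ : ℝ} (hκ0 : 0 < κ) (hκn : κ ≤ n) (f : Fin n → ℝ) :
    uniformCVaR n κ f ≤ ∑ i, 1 / (n : ℝ) * f i +
      √((⌊κ⌋ + Int.fract κ ^ 2) / κ ^ 2 - 1 / n) *
        √(∑ i, (f i - ∑ j, 1 / (n : ℝ) * f j) ^ 2) :=
  csSup_le ⟨_, _, uniform_mem_cappedSimplex hκ0 hκn, rfl⟩ (mean_add_mem_upperBounds hκ0 f)

lemma sum_sq_greedyFill_div {n : ℕ} {κ : ℝ} (hκ0 : 0 < κ) (hκn : κ ≤ n) :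
    ∑ i, (greedyFill n κ i / κ) ^ 2 = (⌊κ⌋ + Int.fract κ ^ 2) / κ ^ 2 := by
  simp only [div_pow, ← sum_div, sum_greedyFill_sq n κ hκ0.le hκn]

/-- Cauchy–Schwarz is an equality for `f = q - p`, and the bound on `‖q - p‖` is attained. -/
lemma uniformCVaR_eq_of_sum_sq_eq {n : ℕ} {κ : ℝ} (hκ0 : 0 < κ) (hκn : κ ≤ n)
    {q : Fin n → ℝ} (hq : q ∈ cappedSimplex n κ⁻¹)
    (hsq : ∑ i, q i ^ 2 = (⌊κ⌋ + Int.fract κ ^ 2) / κ ^ 2)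
    {f : Fin n → ℝ} (hf : ∀ i, f i = q i - 1 / n) :
    uniformCVaR n κ f = ∑ i, 1 / (n : ℝ) * f i +
      √((⌊κ⌋ + Int.fract κ ^ 2) / κ ^ 2 - 1 / n) *
        √(∑ i, (f i - ∑ j, 1 / (n : ℝ) * f j) ^ 2) := by
  have hq1 : ∑ i, q i = 1 := hq.1.1
  have hn := natCast_ne_zero_of_sum_eq_one q hq1
  have hmean : ∑ i, 1 / (n : ℝ) * f i = 0 := by
    simp only [hf, ← mul_sum, sum_sub_distrib, hq1, sum_const, card_univ, Fintype.card_fin,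
      nsmul_eq_mul]
    field_simp
    ring
  have hnorm : ∑ i, f i ^ 2 = (⌊κ⌋ + Int.fract κ ^ 2) / κ ^ 2 - 1 / n := by
    simp only [hf, sum_sub_inv_sq q hq1, hsq]
  have hval : ∑ i, q i * f i = (⌊κ⌋ + Int.fract κ ^ 2) / κ ^ 2 - 1 / n := by
    simp only [hf, mul_sub, sum_sub_distrib, ← sum_mul, hq1, ← sq, hsq, one_mul]
  have hM : 0 ≤ (⌊κ⌋ + Int.fract κ ^ 2) / κ ^ 2 - 1 / n :=
    hnorm ▸ sum_nonneg fun i _ => sq_nonneg _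
  refine le_antisymm (uniformCVaR_le hκ0 hκn f)
    (le_csSup ⟨_, mean_add_mem_upperBounds hκ0 f⟩ ⟨q, hq, ?_⟩)
  simp only [hval, hmean, sub_zero, hnorm, zero_add, Real.mul_self_sqrt hM]

lemma sqrt_sub_div_mul_sqrt_inv_mul {N B κ S : ℝ} (hN : 0 < N) (hκ : 0 < κ) (hS : 0 ≤ S) :
    √(N * B - κ ^ 2) / κ * √(1 / N * S) = √(B / κ ^ 2 - 1 / N) * √S := by
  calc √(N * B - κ ^ 2) / κ * √(1 / N * S)
      = √((N * B - κ ^ 2) / κ ^ 2) * √(1 / N * S) := by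
        rw [Real.sqrt_div' _ (sq_nonneg κ), Real.sqrt_sq hκ.le]
    _ = √((N * B - κ ^ 2) / κ ^ 2 * (1 / N * S)) := (Real.sqrt_mul' _ (by positivity)).symm
    _ = √((B / κ ^ 2 - 1 / N) * S) := by congr 1; field_simp
    _ = √(B / κ ^ 2 - 1 / N) * √S := Real.sqrt_mul' _ hS

/-- for the uniform nominal distribution, the CVaR deviation is bounded
by `C_{α,n} √(V_p f)` with `C_{α,n} = √(n(⌊κ⌋ + (κ−⌊κ⌋)²) − κ²)/κ`, `κ = n(1−α)`,
and the bound is tight. -/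
theorem stmt11 (n : ℕ) (hn : 2 ≤ n) (α : ℝ) (hα0 : 0 < α) (hα1 : α < 1) :
    let p : Fin n → ℝ := fun _ => 1 / n
    let κ : ℝ := n * (1 - α)
    let k : ℝ := (⌊κ⌋ : ℝ)
    let C : ℝ := Real.sqrt (n * (k + (κ - k) ^ 2) - κ ^ 2) / κ
    let E : (Fin n → ℝ) → ℝ := fun f => ∑ i, p i * f i
    let V : (Fin n → ℝ) → ℝ := fun f => ∑ i, p i * (f i - E f) ^ 2
    let cvar : (Fin n → ℝ) → ℝ := fun f =>
      sSup ((fun q : Fin n → ℝ => ∑ i, q i * f i) ''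
        {q : Fin n → ℝ | (∑ i, q i = 1 ∧ ∀ i, 0 ≤ q i) ∧ ∀ i, q i ≤ p i / (1 - α)})
    (∀ f : Fin n → ℝ, cvar f - E f ≤ C * Real.sqrt (V f)) ∧
    (∃ f : Fin n → ℝ, (∃ i j, f i ≠ f j) ∧ cvar f - E f = C * Real.sqrt (V f)) := by
  intro p κ k C E V cvar
  have hN : (0 : ℝ) < n := by positivity
  have hκ0 : 0 < κ := mul_pos hN (sub_pos.mpr hα1)
  have hκn : κ < n := mul_lt_of_lt_one_right hN (by linarith)
  have hcap : 1 / (n : ℝ) / (1 - α) = κ⁻¹ := by rw [div_div, one_div]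
  have hcvar : ∀ f, cvar f = uniformCVaR n κ f := fun f => by
    simp only [cvar, uniformCVaR, cappedSimplex, p, hcap]
  have hC : ∀ f, C * √(V f) = √((⌊κ⌋ + Int.fract κ ^ 2) / κ ^ 2 - 1 / n) *
      √(∑ i, (f i - E f) ^ 2) := fun f => by
    simp only [C, V, k, p, Int.self_sub_floor, ← mul_sum]
    exact sqrt_sub_div_mul_sqrt_inv_mul hN hκ0 (sum_nonneg fun i _ => sq_nonneg _)
  set q : Fin n → ℝ := fun i => greedyFill n κ i / κ
  refine ⟨fun f => ?_, ⟨fun i => q i - 1 / n, ⟨⟨n - 1, by omega⟩, ⟨0, by omega⟩, ?_⟩, ?_⟩⟩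
  · rw [hcvar, hC, sub_le_iff_le_add']
    exact uniformCVaR_le hκ0 hκn.le f
  · simpa [q, hκ0.ne'] using (greedyFill_last_lt_first n hn κ hκ0 hκn).ne
  · rw [hcvar, hC, uniformCVaR_eq_of_sum_sq_eq hκ0 hκn.le
      (greedyFill_div_mem_cappedSimplex hκ0 hκn.le) (sum_sq_greedyFill_div hκ0 hκn.le)
      fun _ => rfl, add_sub_cancel_left]
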